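/- The second singular value s₂ : M₃(ℂ) → ℂ is not 2-positive: for a = diag(1,1,3), b = diag(3,1,1), c = diag(√3, 1, √3), the block matrix [[a, c],[c, b]] is positive semidefinite but the matrix [[s₂(a), s₂(c)],[s₂(c), s₂(b)]] = [[1, √3],[√3, 1]] is not positive semidefinite. -/

import Mathlib

open Matrix BigOperators Finset
open scoped ComplexOrder

/-- The `i`-th largest eigenvalue (0-indexed) of a Hermitian matrix. -/
noncomputable def eigDesc {n : ℕ} (a : Matrix (Fin n) (Fin n) ℂ) (ha : a.IsHermitian) (i : Fin n) : ℝ :=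
  ha.eigenvalues (Tuple.sort ha.eigenvalues i.rev)

/-- Eigenvalues in decreasing order, extended by `0` beyond the size. `eigN a ha i = λ_{i+1}(a)`. -/
noncomputable def eigN {n : ℕ} (a : Matrix (Fin n) (Fin n) ℂ) (ha : a.IsHermitian) (i : ℕ) : ℝ :=
  if h : i < n then eigDesc a ha ⟨i, h⟩ else 0

/-- The non-linear trace of Choquet type:
`φ_α(a) = ∑_{i=1}^{n-1} (λ_i(a) - λ_{i+1}(a)) α(i) + λ_n(a) α(n)`. -/
noncomputable def choquetTrace {n : ℕ} (α : ℕ → ℝ) (a : Matrix (Fin n) (Fin n) ℂ)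
    (ha : a.IsHermitian) : ℝ :=
  ∑ i ∈ Finset.range n, (eigN a ha i - eigN a ha (i + 1)) * α (i + 1)

/-- Functional calculus of a Hermitian matrix `a` by a function `f : ℝ → ℝ` on its eigenvalues. -/
noncomputable def funCalc {n : ℕ} (f : ℝ → ℝ) (a : Matrix (Fin n) (Fin n) ℂ)
    (ha : a.IsHermitian) : Matrix (Fin n) (Fin n) ℂ :=
  (ha.eigenvectorUnitary : Matrix (Fin n) (Fin n) ℂ) *
    Matrix.diagonal (fun i => (f (ha.eigenvalues i) : ℂ)) *
    star (ha.eigenvectorUnitary : Matrix (Fin n) (Fin n) ℂ)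

/-- The absolute value `|a| = (a^* a)^{1/2}` of a matrix. -/
noncomputable def matAbs {n : ℕ} (a : Matrix (Fin n) (Fin n) ℂ) : Matrix (Fin n) (Fin n) ℂ :=
  (Matrix.posSemidef_conjTranspose_mul_self a).1.eigenvectorUnitary.1 *
    diagonal ((↑) ∘ (√·) ∘ (Matrix.posSemidef_conjTranspose_mul_self a).1.eigenvalues) *
    (star (Matrix.posSemidef_conjTranspose_mul_self a).1.eigenvectorUnitary : Matrix (Fin n) (Fin n) ℂ)

theorem matAbs_isHermitian {n : ℕ} (a : Matrix (Fin n) (Fin n) ℂ) : (matAbs a).IsHermitian :=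
  Matrix.isHermitian_mul_mul_conjTranspose _
    (Matrix.isHermitian_diagonal_of_self_adjoint _ (by ext i; simp))

/-- The second largest singular value of a `3 × 3` complex matrix. -/
noncomputable def s2 (a : Matrix (Fin 3) (Fin 3) ℂ) : ℝ := eigN (matAbs a) (matAbs_isHermitian a) 1

/-! For a positive semidefinite matrix `a` we have `|a| = a`, so for the three nonnegative
diagonal matrices `s₂` is the middle entry of the sorted diagonal: `1`, `1` and `√3`. The block
matrix is the Gram matrix `Lᴴ L` of `L = [diag(1,1,√3) | diag(√3,1,1)]`, while the quadratic form
of `[[1, √3], [√3, 1]]` at `(1, -1)` is `2 - 2√3 < 0`. -/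

open scoped MatrixOrder

theorem Tuple.comp_sort_eq_of_map_univ_eq {n : ℕ} {α : Type*} [LinearOrder α] {f g : Fin n → α}
    (h : univ.val.map f = univ.val.map g) : f ∘ Tuple.sort f = g ∘ Tuple.sort g := by
  have map_comp_sort (f : Fin n → α) : univ.val.map (f ∘ Tuple.sort f) = univ.val.map f := by
    rw [← Multiset.map_map, Multiset.map_univ_val_equiv]
  apply List.ofFn_injective
  refine List.Perm.eq_of_sortedLE (Tuple.monotone_sort f).sortedLE_ofFn
    (Tuple.monotone_sort g).sortedLE_ofFn ?_
  rw [← Multiset.coe_eq_coe, ← Fin.univ_val_map, ← Fin.univ_val_map, map_comp_sort, map_comp_sort, h]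

theorem Matrix.IsHermitian.map_eigenvalues_diagonal {n 𝕜 : Type*} [Fintype n] [DecidableEq n]
    [RCLike 𝕜] (d : n → ℝ) (h : (diagonal fun i => (d i : 𝕜)).IsHermitian) :
    univ.val.map h.eigenvalues = univ.val.map d := by
  have hroots := h.roots_charpoly_eq_eigenvalues
  rw [charpoly_diagonal, Polynomial.roots_prod _ _
    (prod_ne_zero_iff.mpr fun i _ => Polynomial.X_sub_C_ne_zero _)] at hroots
  simp only [Polynomial.roots_X_sub_C, Multiset.bind_singleton] at hroots
  refine Multiset.map_injective (RCLike.ofReal_injective (K := 𝕜)) ?_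
  rw [Multiset.map_map, ← hroots, Multiset.map_map]
  rfl

theorem eigN_diagonal {n : ℕ} (d : Fin n → ℝ) (h : (diagonal fun i => (d i : ℂ)).IsHermitian)
    {τ : Equiv.Perm (Fin n)} (hτ : Monotone (d ∘ τ)) (i : Fin n) :
    eigN (diagonal fun i => (d i : ℂ)) h i = d (τ i.rev) := by
  have hsort : h.eigenvalues ∘ Tuple.sort h.eigenvalues = d ∘ τ :=
    (Tuple.comp_sort_eq_of_map_univ_eq (h.map_eigenvalues_diagonal d)).trans
      (Tuple.comp_sort_eq_comp_iff_monotone.mpr hτ).symm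
  simpa [eigN, eigDesc] using congrFun hsort i.rev

theorem eigN_eq_of_eq {n : ℕ} {a b : Matrix (Fin n) (Fin n) ℂ} (hab : a = b) (ha : a.IsHermitian)
    (hb : b.IsHermitian) (i : ℕ) : eigN a ha i = eigN b hb i := by
  subst hab; rfl

theorem matAbs_eq_abs {n : ℕ} (a : Matrix (Fin n) (Fin n) ℂ) : matAbs a = CFC.abs a := by
  have h := posSemidef_conjTranspose_mul_self a
  rw [CFC.abs, CFC.sqrt_eq_cfc, star_eq_conjTranspose,
    cfc_nnreal_eq_real _ _ (Matrix.nonneg_iff_posSemidef.mpr h), h.1.cfc_eq]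
  simp [IsHermitian.cfc, matAbs, Function.comp_def, h.eigenvalues_nonneg]

theorem matAbs_of_posSemidef {n : ℕ} {a : Matrix (Fin n) (Fin n) ℂ} (ha : a.PosSemidef) :
    matAbs a = a := by
  rw [matAbs_eq_abs, CFC.abs_of_nonneg a (Matrix.nonneg_iff_posSemidef.mpr ha)]

theorem s2_diagonal_of_nonneg (d : Fin 3 → ℝ) (hd : 0 ≤ d) {τ : Equiv.Perm (Fin 3)}
    (hτ : Monotone (d ∘ τ)) : s2 (diagonal fun i => (d i : ℂ)) = d (τ 1) := by
  have hpsd : (diagonal fun i => (d i : ℂ)).PosSemidef :=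
    posSemidef_diagonal_iff.mpr fun i => Complex.zero_le_real.mpr (hd i)
  rw [s2, eigN_eq_of_eq (matAbs_of_posSemidef hpsd) _ hpsd.1]
  exact eigN_diagonal d hpsd.1 hτ 1

theorem posSemidef_fromBlocks_conjTranspose_mul {m n 𝕜 : Type*} [Fintype m] [Fintype n] [RCLike 𝕜]
    (X Y : Matrix m n 𝕜) : (fromBlocks (Xᴴ * X) (Xᴴ * Y) (Yᴴ * X) (Yᴴ * Y)).PosSemidef := by
  simpa [conjTranspose_fromCols_eq_fromRows_conjTranspose, fromRows_mul_fromCols] using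
    posSemidef_conjTranspose_mul_self (fromCols X Y)

theorem posSemidef_fromBlocks_diagonal_counterexample :
    (fromBlocks (diagonal ![1, 1, 3]) (diagonal ![(√3 : ℂ), 1, (√3 : ℂ)])
      (diagonal ![(√3 : ℂ), 1, (√3 : ℂ)]) (diagonal ![3, 1, 1])).PosSemidef := by
  have hsqrt : (√3 : ℂ) * √3 = 3 := by
    rw [← Complex.ofReal_mul, Real.mul_self_sqrt (by norm_num)]; norm_num
  set X : Matrix (Fin 3) (Fin 3) ℂ := diagonal ![1, 1, (√3 : ℂ)]
  set Y : Matrix (Fin 3) (Fin 3) ℂ := diagonal ![(√3 : ℂ), 1, 1]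
  refine (congrArg PosSemidef ?_).mpr (posSemidef_fromBlocks_conjTranspose_mul X Y)
  simp only [X, Y, diagonal_conjTranspose, diagonal_mul_diagonal]
  congr 2 <;> ext i <;> fin_cases i <;> simp [hsqrt]

theorem not_posSemidef_of_lt {x y : ℝ} (h : x < y) : ¬ (!![(x : ℂ), y; y, x]).PosSemidef := by
  intro hpsd
  have hform : star ![1, -1] ⬝ᵥ (!![(x : ℂ), y; y, x] *ᵥ ![1, -1]) = ((2 * (x - y) : ℝ) : ℂ) := by
    simp only [dotProduct, mulVec, Fin.sum_univ_two, Pi.star_apply, of_apply, cons_val',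
      cons_val_zero, cons_val_one, cons_val_fin_one, star_one, star_neg]
    push_cast
    ring
  have := hpsd.dotProduct_mulVec_nonneg ![1, -1]
  rw [hform, Complex.zero_le_real] at this
  linarith

/-- `s₂ : M₃(ℂ) → ℂ` is not 2-positive, witnessed by
`a = diag(1,1,3)`, `b = diag(3,1,1)`, `c = diag(√3,1,√3)`. -/
theorem stmt14 (a b c : Matrix (Fin 3) (Fin 3) ℂ)
    (hA : a = Matrix.diagonal ![1, 1, 3])
    (hB : b = Matrix.diagonal ![3, 1, 1])
    (hC : c = Matrix.diagonal ![(Real.sqrt 3 : ℂ), 1, (Real.sqrt 3 : ℂ)]) :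
    (Matrix.fromBlocks a c c b).PosSemidef ∧
    s2 a = 1 ∧ s2 b = 1 ∧ s2 c = Real.sqrt 3 ∧
    ¬ (!![(s2 a : ℂ), (s2 c : ℂ); (s2 c : ℂ), (s2 b : ℂ)] : Matrix (Fin 2) (Fin 2) ℂ).PosSemidef := by
  subst hA hB hC
  have hsa : s2 (diagonal ![1, 1, 3]) = 1 := by
    convert s2_diagonal_of_nonneg ![1, 1, 3] (by intro i; fin_cases i <;> simp)
      (τ := Equiv.refl _) (by simp [Fin.monotone_iff_le_succ, Fin.forall_fin_succ]) using 2
    · congr 1; ext i; fin_cases i <;> simp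
    · rfl
  have hsb : s2 (diagonal ![3, 1, 1]) = 1 := by
    convert s2_diagonal_of_nonneg ![3, 1, 1] (by intro i; fin_cases i <;> simp)
      (τ := Equiv.swap 0 2)
      (by simp [Fin.monotone_iff_le_succ, Fin.forall_fin_succ, Equiv.swap_apply_def]) using 2
    · congr 1; ext i; fin_cases i <;> simp
    · rfl
  have hsc : s2 (diagonal ![(√3 : ℂ), 1, (√3 : ℂ)]) = √3 := by
    convert s2_diagonal_of_nonneg ![√3, 1, √3] (by intro i; fin_cases i <;> simp)
      (τ := Equiv.swap 0 1) (by simp [Fin.monotone_iff_le_succ, Fin.forall_fin_succ]) using 2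
    · congr 1; ext i; fin_cases i <;> simp
    · rfl
  refine ⟨posSemidef_fromBlocks_diagonal_counterexample, hsa, hsb, hsc, ?_⟩
  rw [hsa, hsb, hsc]
  exact_mod_cast not_posSemidef_of_lt (x := 1) (y := √3) (by simp [Real.lt_sqrt])
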